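/- Let n ≥ 2 and let n_1,...,n_b be divisors of n with n_j ≥ 2. There exists a surjective group homomorphism Φ from the free product Z_{n_1} * Z_{n_2} * ... * Z_{n_b} onto Z_n whose kernel is torsion-free if and only if gcd(n/n_1, ..., n/n_b) = 1. -/

import Mathlib

/-!
An element of finite order in a free product of groups is conjugate into a factor: a reduced
word whose first and last letters lie in different factors has infinite order, and when they lie
in the same factor, conjugating by the first letter either shortens the word or produces a word
of the first kind. Hence the kernel of `Φ` is torsion-free as soon as `Φ` is injective on every
factor.

The image of `Z_{n_j}` in `Z_n` is killed by `n_j`, so it consists of multiples of `n / n_j`;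
if these images generate `Z_n`, the reduction `Z_n → Z_d`, `d = gcd (n / n_j)`, kills a
generating set, so `d = 1`. Conversely, `n / n_j` has order `n_j`, so `1 ↦ n / n_j` defines
injections `Z_{n_j} → Z_n`, and by Bézout their images generate `Z_n` when `d = 1`.
-/

namespace Monoid.CoprodI

namespace NeWord

variable {ι : Type*} {M : ι → Type*} [∀ i, Monoid (M i)]

theorem prod_ne_one {i j : ι} (w : NeWord M i j) : w.prod ≠ 1 := by
  classical
  intro h
  have hw : w.toWord = Word.empty := Word.equiv.symm.injective (h.trans Word.prod_empty.symm)
  exact w.toList_ne_nil (congrArg Word.toList hw)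

theorem not_isOfFinOrder_prod {i j : ι} (w : NeWord M i j) (hij : i ≠ j) :
    ¬IsOfFinOrder w.prod := by
  have hpow : ∀ k : ℕ, ∃ u : NeWord M i j, u.prod = w.prod ^ (k + 1) := by
    intro k
    induction k with
    | zero => exact ⟨w, (pow_one _).symm⟩
    | succ k ih =>
      obtain ⟨u, hu⟩ := ih
      exact ⟨append u hij.symm w, by rw [append_prod, hu, ← pow_succ]⟩
  rw [isOfFinOrder_iff_pow_eq_one]
  rintro ⟨k, hk, hk1⟩
  obtain ⟨u, hu⟩ := hpow (k - 1)
  rw [Nat.sub_add_cancel hk, hk1] at hu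
  exact u.prod_ne_one hu

theorem length_one_or_exists_prod_eq_of_mul {i j : ι} (w : NeWord M i j) :
    (i = j ∧ ∃ a : M i, w.prod = of a ∧ w.toList.length = 1) ∨
      ∃ k, i ≠ k ∧ ∃ (a : M i) (v : NeWord M k j),
        w.prod = of a * v.prod ∧ w.toList.length = v.toList.length + 1 := by
  induction w with
  | singleton a _ => exact .inl ⟨rfl, a, prod_singleton _ _, rfl⟩
  | @append i j k l w₁ hjk w₂ ih₁ _ =>
    rcases ih₁ with ⟨rfl, a, ha, hlen⟩ | ⟨k', hik', a, v, hv, hlen⟩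
    · exact .inr ⟨k, hjk, a, w₂, by simp [ha, hlen, add_comm]⟩
    · exact .inr ⟨k', hik', a, append v hjk w₂, by simp [hv, hlen, mul_assoc]; omega⟩

theorem length_one_or_exists_prod_eq_mul_of {i j : ι} (w : NeWord M i j) :
    (i = j ∧ ∃ c : M j, w.prod = of c ∧ w.toList.length = 1) ∨
      ∃ l, l ≠ j ∧ ∃ (v : NeWord M i l) (c : M j),
        w.prod = v.prod * of c ∧ w.toList.length = v.toList.length + 1 := by
  induction w with
  | singleton c _ => exact .inl ⟨rfl, c, prod_singleton _ _, rfl⟩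
  | @append i j k l w₁ hjk w₂ _ ih₂ =>
    rcases ih₂ with ⟨rfl, c, hc, hlen⟩ | ⟨l', hl', v, c, hv, hlen⟩
    · exact .inr ⟨j, hjk, w₁, c, by simp [hc, hlen]⟩
    · exact .inr ⟨l', hl', append w₁ hjk v, c, by simp [hv, hlen, mul_assoc]; omega⟩

end NeWord

variable {ι : Type*} {G : ι → Type*} [∀ i, Group (G i)]

theorem NeWord.exists_isConj_of_isOfFinOrder {i j : ι} (w : NeWord G i j)
    (hw : IsOfFinOrder w.prod) : ∃ k, ∃ y : G k, IsConj (of y) w.prod := by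
  induction hlen : w.toList.length using Nat.strong_induction_on generalizing i j w with
  | _ len ih =>
  obtain rfl : i = j := by
    by_contra hij
    exact w.not_isOfFinOrder_prod hij hw
  rcases w.length_one_or_exists_prod_eq_of_mul with ⟨-, a, ha, -⟩ | ⟨k, hik, a, u, hu, hulen⟩
  · exact ⟨i, a, ha ▸ .refl _⟩
  rcases u.length_one_or_exists_prod_eq_mul_of with ⟨hki, -⟩ | ⟨l, hli, v, c, hv, hvlen⟩
  · exact absurd hki.symm hik
  -- conjugating by `of a` moves the first letter `a` next to the last letter `c`: either they
  -- cancel, leaving the shorter word `v`, or the result is a word from `G k` to `G i`, `k ≠ i`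
  have hconj : IsConj w.prod (v.prod * of (c * a)) :=
    isConj_iff.2 ⟨of a⁻¹, by simp [hu, hv, mul_assoc]⟩
  by_cases hca : c * a = 1
  · rw [hca, map_one, mul_one] at hconj
    obtain ⟨m, y, hy⟩ := ih v.toList.length (by omega) v (hconj.isOfFinOrder hw) rfl
    exact ⟨m, y, hy.trans hconj.symm⟩
  · have hinf := (append v hli (singleton _ hca)).not_isOfFinOrder_prod hik.symm
    simp only [append_prod, prod_singleton] at hinf
    exact absurd (hconj.isOfFinOrder hw) hinf

theorem exists_isConj_of_isOfFinOrder [Nonempty ι] {x : CoprodI G} (hx : IsOfFinOrder x) :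
    ∃ i, ∃ y : G i, IsConj (of y) x := by
  classical
  by_cases h : Word.equiv x = Word.empty
  · have hx1 : x = 1 := by
      rw [← Word.equiv.symm_apply_apply x, h]
      exact Word.prod_empty
    exact ⟨Classical.arbitrary ι, 1, by simp [hx1]⟩
  obtain ⟨i, j, w, hw⟩ := NeWord.of_word _ h
  have hwx : w.prod = x := by
    rw [NeWord.prod, hw]
    exact Word.equiv.symm_apply_apply x
  exact hwx ▸ w.exists_isConj_of_isOfFinOrder (hwx ▸ hx)

theorem eq_one_of_mem_ker_of_isOfFinOrder [Nonempty ι] {H : Type*} [Group H]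
    {Φ : CoprodI G →* H} (hΦ : ∀ i, Function.Injective (Φ.comp (of : G i →* _)))
    {x : CoprodI G} (hker : x ∈ Φ.ker) (hx : IsOfFinOrder x) : x = 1 := by
  obtain ⟨i, y, hyx⟩ := exists_isConj_of_isOfFinOrder hx
  have hy : y = 1 :=
    (injective_iff_map_eq_one _).1 (hΦ i) y (isConj_one_left.1 (hker ▸ Φ.map_isConj hyx))
  rwa [hy, map_one, isConj_one_right] at hyx

end Monoid.CoprodI

@[to_additive]
theorem Subgroup.pow_finset_gcd_mem {G ι : Type*} [Group G] (H : Subgroup G) (a : G)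
    (s : Finset ι) (k : ι → ℕ) (hk : ∀ j ∈ s, a ^ k j ∈ H) : a ^ s.gcd k ∈ H := by
  classical
  induction s using Finset.induction_on with
  | empty => simp
  | insert j s _ ih =>
    rw [Finset.forall_mem_insert] at hk
    rw [Finset.gcd_insert, ← zpow_natCast, show (gcd (k j) (s.gcd k) : ℕ) = Nat.gcd _ _ from rfl,
      Nat.gcd_eq_gcd_ab, zpow_add, zpow_mul, zpow_mul, zpow_natCast, zpow_natCast]
    exact mul_mem (zpow_mem hk.1 _) (zpow_mem (ih hk.2) _)

theorem exists_injective_zmod_of_addOrderOf_eq {A : Type*} [AddGroup A] {a : A} {m : ℕ}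
    (ha : addOrderOf a = m) : ∃ f : ZMod m →+ A, Function.Injective f ∧ f 1 = a := by
  refine ⟨ZMod.lift m ⟨zmultiplesHom A a, by simp [← ha]⟩, ?_, ?_⟩
  · refine (ZMod.lift_injective m).2 fun k hk => (ZMod.intCast_zmod_eq_zero_iff_dvd k m).2 ?_
    exact ha ▸ addOrderOf_dvd_iff_zsmul_eq_zero.2 hk
  · simpa using ZMod.lift_coe m ⟨zmultiplesHom A a, by simp [← ha]⟩ 1

namespace ZMod

theorem addOrderOf_natCast_div {m n : ℕ} (hm : m ∣ n) (hn : n ≠ 0) :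
    addOrderOf ((n / m : ℕ) : ZMod n) = m := by
  rw [ZMod.addOrderOf_coe _ hn, Nat.gcd_eq_right (Nat.div_dvd_of_dvd hm), Nat.div_div_self hm hn]

theorem castHom_eq_zero_of_nsmul_eq_zero {m n d : ℕ} [NeZero n] (hm : m ∣ n) (hd : d ∣ n / m)
    {x : ZMod n} (hx : m • x = 0) :
    ZMod.castHom (hd.trans (Nat.div_dvd_of_dvd hm)) (ZMod d) x = 0 := by
  rw [← x.natCast_zmod_val, nsmul_eq_mul, ← Nat.cast_mul, ZMod.natCast_eq_zero_iff] at hx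
  rw [← x.natCast_zmod_val, map_natCast, ZMod.natCast_eq_zero_iff]
  exact hd.trans ((Nat.div_dvd_iff_dvd_mul hm (Nat.pos_of_dvd_of_pos hm (NeZero.pos n))).2 hx)

end ZMod

section CyclicFactors

open Monoid Multiplicative

variable {ι : Type*} [Fintype ι] {n : ℕ} [NeZero n] {ns : ι → ℕ}

theorem finset_gcd_div_eq_one_of_surjective [Nonempty ι] (hdvd : ∀ j, ns j ∣ n)
    {Φ : CoprodI (fun j => Multiplicative (ZMod (ns j))) →* Multiplicative (ZMod n)}
    (hΦ : Function.Surjective Φ) : Finset.univ.gcd (fun j => n / ns j) = 1 := by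
  set d := Finset.univ.gcd fun j => n / ns j
  obtain ⟨j₀⟩ := ‹Nonempty ι›
  have hdn : d ∣ n := (Finset.gcd_dvd (Finset.mem_univ j₀)).trans (Nat.div_dvd_of_dvd (hdvd j₀))
  let π := (ZMod.castHom hdn (ZMod d)).toAddMonoidHom.toMultiplicative
  have hπΦ : π.comp Φ = 1 := CoprodI.ext_hom _ _ fun j => MonoidHom.ext fun y => by
    have hy : y ^ ns j = 1 := by
      rw [← ofAdd_toAdd y, ← ofAdd_nsmul, nsmul_eq_mul, ZMod.natCast_self, zero_mul, ofAdd_zero]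
    have hΦy : ns j • toAdd (Φ (CoprodI.of y)) = 0 := by
      rw [← toAdd_pow, ← map_pow, ← map_pow, hy, map_one, map_one, toAdd_one]
    exact congrArg ofAdd (ZMod.castHom_eq_zero_of_nsmul_eq_zero (hdvd j)
      (Finset.gcd_dvd (f := fun j => n / ns j) (Finset.mem_univ j)) hΦy)
  obtain ⟨g, hg⟩ := hΦ (ofAdd 1)
  have h1 := congrArg toAdd (DFunLike.congr_fun hπΦ g)
  rw [MonoidHom.comp_apply, hg] at h1
  exact ZMod.one_eq_zero_iff.1 ((map_one (ZMod.castHom hdn (ZMod d))).symm.trans h1)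

theorem exists_surjective_injective_of_finset_gcd_div_eq_one (hdvd : ∀ j, ns j ∣ n)
    (hgcd : Finset.univ.gcd (fun j => n / ns j) = 1) :
    ∃ Φ : CoprodI (fun j => Multiplicative (ZMod (ns j))) →* Multiplicative (ZMod n),
      Function.Surjective Φ ∧ ∀ j, Function.Injective (Φ.comp (CoprodI.of (i := j))) := by
  choose f hf_inj hf_one using fun j =>
    exists_injective_zmod_of_addOrderOf_eq (ZMod.addOrderOf_natCast_div (hdvd j) (NeZero.ne n))
  let ψ j := (f j).toMultiplicative
  refine ⟨CoprodI.lift ψ, ?_, fun j => by rw [CoprodI.lift_comp_of]; exact hf_inj j⟩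
  have hgen : ofAdd (1 : ZMod n) ∈ (CoprodI.lift ψ).range := by
    have := Subgroup.pow_finset_gcd_mem (CoprodI.lift ψ).range (ofAdd 1) Finset.univ
      (fun j => n / ns j)
      fun j _ => ⟨CoprodI.of (i := j) (ofAdd 1), by simp [ψ, hf_one, ← ofAdd_nsmul]⟩
    rwa [hgcd, pow_one] at this
  rw [← MonoidHom.range_eq_top, eq_top_iff]
  rintro x -
  rw [← ofAdd_toAdd x, ← (toAdd x).natCast_zmod_val, ← Nat.smul_one_eq_cast, ofAdd_nsmul]
  exact pow_mem hgen _

end CyclicFactors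

theorem stmt1_general (n b : ℕ) (hn : 2 ≤ n) (hb : 1 ≤ b) (ns : Fin b → ℕ)
    (hdvd : ∀ j, ns j ∣ n) :
    (∃ Φ : Monoid.CoprodI (fun j : Fin b => Multiplicative (ZMod (ns j))) →*
        Multiplicative (ZMod n),
      Function.Surjective Φ ∧ ∀ x ∈ Φ.ker, IsOfFinOrder x → x = 1) ↔
    Finset.univ.gcd (fun j : Fin b => n / ns j) = 1 := by
  have : NeZero n := ⟨by omega⟩
  have : Nonempty (Fin b) := ⟨⟨0, hb⟩⟩
  constructor
  · rintro ⟨Φ, hΦ, -⟩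
    exact finset_gcd_div_eq_one_of_surjective hdvd hΦ
  · intro hgcd
    obtain ⟨Φ, hsurj, hinj⟩ := exists_surjective_injective_of_finset_gcd_div_eq_one hdvd hgcd
    exact ⟨Φ, hsurj, fun x hx => Monoid.CoprodI.eq_one_of_mem_ker_of_isOfFinOrder hinj hx⟩

/-- There is a surjective homomorphism from the free product
`Z_{n_1} * ... * Z_{n_b}` onto `Z_n` with torsion-free kernel iff
`gcd(n/n_1, ..., n/n_b) = 1`. -/
theorem stmt1 (n b : ℕ) (hn : 2 ≤ n) (hb : 1 ≤ b) (ns : Fin b → ℕ)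
    (h2 : ∀ j, 2 ≤ ns j) (hdvd : ∀ j, ns j ∣ n) :
    (∃ Φ : Monoid.CoprodI (fun j : Fin b => Multiplicative (ZMod (ns j))) →*
        Multiplicative (ZMod n),
      Function.Surjective Φ ∧ ∀ x ∈ Φ.ker, IsOfFinOrder x → x = 1) ↔
    Finset.univ.gcd (fun j : Fin b => n / ns j) = 1 :=
  stmt1_general n b hn hb ns hdvd
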